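/- arXiv:1110.5489 — 2 statements merged into one kernel-verified Lean document; each statement's English description precedes it below -/
import Mathlib

section
/- Let (X^ε, Ω, P^ε) be an irreducible, OM-reversible parametrized family of Markov chains on a finite state space with stationary distributions π^ε whose entries have integer orders of magnitude φ(π(x)). Then for all x, y ∈ Ω with P(x,y) > 0, φ(P(x,y)) − φ(P(y,x)) = φ(π(y)) − φ(π(x)); in particular, if φ(π(y)) > φ(π(x)) then φ(P(x,y)) ≥ 1, so the probability of a transition from x to y is at least one order of magnitude in ε smaller than the probability of a transition from y to x. -/
open Finset

/-- `f` is `Θ(ε^k)` as `ε → 0⁺`: there are positive constants `M₁, M₂, ε̄` with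
`M₁ ε^k ≤ f ε ≤ M₂ ε^k` for all `0 < ε < ε̄`. -/
def IsTheta (f : ℝ → ℝ) (k : ℤ) : Prop :=
  ∃ M₁ M₂ εbar : ℝ, 0 < M₁ ∧ 0 < M₂ ∧ 0 < εbar ∧
    ∀ ε : ℝ, 0 < ε → ε < εbar → M₁ * ε ^ k ≤ f ε ∧ f ε ≤ M₂ * ε ^ k

/-- `P(u,v) > 0` in the order-of-magnitude sense: `ε ↦ P^ε(u,v)` is `Θ(ε^k)`
for some integer `k`. -/
def EPos {Ω : Type*} (P : ℝ → Ω → Ω → ℝ) (u v : Ω) : Prop :=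
  ∃ k : ℤ, IsTheta (fun ε => P ε u v) k

/-!
Put `d = φ(π) - ν`. By order-of-magnitude detailed balance, `π(p) P(p,q)` and `π(q) P(q,p)` have
orders `d p + c` and `d q + c` with the same `c = ν q + φ(P(q,p))`, so for small `ε` the net flow
`π(p) P(p,q) - π(q) P(q,p)` is negative along every edge on which `d` decreases (and vanishes
between non-adjacent states). Stationarity makes the net flow out of any set zero. But every edge
leaving a superlevel set of `d` goes down in `d`, and by irreducibility some edge leaves it unless
it is everything. Hence `d` is constant, which is the identity; the inequality follows since
`φ(P(y,x)) ≥ 0` because `P ≤ 1`.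
-/

open Filter Topology

lemma Nat.exists_lt_and_not_succ {p : ℕ → Prop} {r : ℕ} (h0 : p 0) (hr : ¬ p r) :
    ∃ i < r, p i ∧ ¬ p (i + 1) := by
  induction r with
  | zero => exact absurd h0 hr
  | succ n ih =>
    by_cases hn : p n
    · exact ⟨n, n.lt_succ_self, hn, hr⟩
    · obtain ⟨i, hi, h⟩ := ih hn
      exact ⟨i, hi.trans n.lt_succ_self, h⟩

namespace IsTheta

variable {f g : ℝ → ℝ} {k l : ℤ}

lemma one : IsTheta (fun _ => 1) 0 :=
  ⟨1, 1, 1, one_pos, one_pos, one_pos, fun _ _ _ => by simp⟩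

lemma eventually_bounds (hf : IsTheta f k) :
    ∃ M₁ M₂ : ℝ, 0 < M₁ ∧ 0 < M₂ ∧
      ∀ᶠ ε in 𝓝[>] (0 : ℝ), M₁ * ε ^ k ≤ f ε ∧ f ε ≤ M₂ * ε ^ k := by
  obtain ⟨M₁, M₂, εbar, hM₁, hM₂, hεbar, hb⟩ := hf
  exact ⟨M₁, M₂, hM₁, hM₂, mem_of_superset (Ioo_mem_nhdsGT hεbar) fun ε hε => hb ε hε.1 hε.2⟩

lemma mul (hf : IsTheta f k) (hg : IsTheta g l) : IsTheta (fun ε => f ε * g ε) (k + l) := by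
  obtain ⟨A₁, A₂, εf, hA₁, hA₂, hεf, hfb⟩ := hf
  obtain ⟨B₁, B₂, εg, hB₁, hB₂, hεg, hgb⟩ := hg
  refine ⟨A₁ * B₁, A₂ * B₂, min εf εg, by positivity, by positivity, by positivity, ?_⟩
  intro ε hε hlt
  obtain ⟨hf₁, hf₂⟩ := hfb ε hε (hlt.trans_le (min_le_left _ _))
  obtain ⟨hg₁, hg₂⟩ := hgb ε hε (hlt.trans_le (min_le_right _ _))
  have hfnn : 0 ≤ f ε := hf₁.trans' (by positivity)
  rw [zpow_add₀ hε.ne', mul_mul_mul_comm, mul_mul_mul_comm A₂]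
  exact ⟨mul_le_mul hf₁ hg₁ (by positivity) hfnn, mul_le_mul hf₂ hg₂ (hg₁.trans' (by positivity)) (by positivity)⟩

lemma eventually_lt (hf : IsTheta f k) (hg : IsTheta g l) (hlk : l < k) :
    ∀ᶠ ε in 𝓝[>] (0 : ℝ), f ε < g ε := by
  obtain ⟨_, A₂, _, hA₂, hfb⟩ := hf.eventually_bounds
  obtain ⟨B₁, _, hB₁, _, hgb⟩ := hg.eventually_bounds
  filter_upwards [hfb, hgb, Ioo_mem_nhdsGT (lt_min one_pos (div_pos hB₁ hA₂))]
    with ε ⟨_, hf⟩ ⟨hg, _⟩ ⟨hε₀, hε⟩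
  have hε₁ : ε ≤ 1 := (hε.trans_le (min_le_left _ _)).le
  have hεB : A₂ * ε < B₁ := (lt_div_iff₀' hA₂).1 (hε.trans_le (min_le_right _ _))
  calc f ε ≤ A₂ * ε ^ k := hf
    _ ≤ A₂ * ε ^ (l + 1) := by
      gcongr A₂ * ?_; exact zpow_le_zpow_right_of_le_one₀ hε₀ hε₁ hlk
    _ = A₂ * ε * ε ^ l := by rw [zpow_add_one₀ hε₀.ne']; ring
    _ < B₁ * ε ^ l := by gcongr
    _ ≤ g ε := hg

lemma nonneg_of_eventually_le_one (hf : IsTheta f k) (hle : ∀ᶠ ε in 𝓝[>] (0 : ℝ), f ε ≤ 1) :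
    0 ≤ k := by
  by_contra! hk
  obtain ⟨ε, hle, hlt⟩ := (hle.and (one.eventually_lt hf hk)).exists
  exact hlt.not_ge hle

end IsTheta

def netFlow {Ω : Type*} (π : Ω → ℝ) (P : Ω → Ω → ℝ) (p q : Ω) : ℝ :=
  π p * P p q - π q * P q p

section NetFlow

variable {Ω : Type*} [Fintype Ω] [DecidableEq Ω]

lemma sum_netFlow_compl_eq_zero {π : Ω → ℝ} {P : Ω → Ω → ℝ} (hrow : ∀ u, ∑ v, P u v = 1)
    (hstat : ∀ y, ∑ x, π x * P x y = π y) (A : Finset Ω) :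
    ∑ p ∈ A, ∑ q ∈ Aᶜ, netFlow π P p q = 0 := by
  have hout : ∀ p, ∑ q ∈ Aᶜ, π p * P p q = π p - ∑ q ∈ A, π p * P p q := fun p => by
    rw [eq_sub_iff_add_eq, sum_compl_add_sum, ← mul_sum, hrow, mul_one]
  have hin : ∀ p, ∑ q ∈ Aᶜ, π q * P q p = π p - ∑ q ∈ A, π q * P q p := fun p => by
    rw [eq_sub_iff_add_eq, sum_compl_add_sum, hstat]
  simp only [netFlow, sum_sub_distrib, hout, hin]
  rw [sum_comm (s := A) (t := A) (f := fun p q => π q * P q p)]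
  ring

lemma eq_of_netFlow_downhill {R : Ω → Ω → Prop}
    (hconn : ∀ u v, ∃ (r : ℕ) (c : ℕ → Ω), c 0 = u ∧ c r = v ∧ ∀ i < r, R (c i) (c (i + 1)))
    {F : Ω → Ω → ℝ} (hcut : ∀ A : Finset Ω, ∑ p ∈ A, ∑ q ∈ Aᶜ, F p q = 0) {d : Ω → ℤ}
    (hle : ∀ p q, d q < d p → F p q ≤ 0) (hlt : ∀ p q, R p q → d q < d p → F p q < 0)
    (u v : Ω) : d u = d v := by
  suffices h : ∀ u v, d u ≤ d v from (h u v).antisymm (h v u)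
  intro u v
  by_contra! huv
  set A := univ.filter fun z => d u ≤ d z
  obtain ⟨r, c, rfl, hcr, hc⟩ := hconn u v
  obtain ⟨i, hi, hciA, hci₁A⟩ := Nat.exists_lt_and_not_succ (p := fun i => c i ∈ A) (r := r)
    (by simp [A]) (by simpa [A, hcr] using huv)
  have hdown : ∀ p ∈ A, ∀ q ∈ Aᶜ, d q < d p := fun p hp q hq => by
    simp only [A, mem_compl, mem_filter, mem_univ, true_and, not_le] at hp hq
    exact hq.trans_le hp
  have hneg : ∑ pq ∈ A ×ˢ Aᶜ, F pq.1 pq.2 < 0 := by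
    refine sum_neg' (fun pq hpq => ?_) ⟨(c i, c (i + 1)), ?_, ?_⟩
    · rw [mem_product] at hpq
      exact hle _ _ (hdown _ hpq.1 _ hpq.2)
    · exact mem_product.2 ⟨hciA, mem_compl.2 hci₁A⟩
    · exact hlt _ _ (hc i hi) (hdown _ hciA _ (mem_compl.2 hci₁A))
  rw [sum_product, hcut] at hneg
  exact hneg.false

end NetFlow

section OMReversible

variable {Ω : Type*} {P : ℝ → Ω → Ω → ℝ} {π : ℝ → Ω → ℝ} {φP : Ω → Ω → ℤ} {φπ ν : Ω → ℤ}

lemma IsTheta.nonneg_of_stochastic [Fintype Ω]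
    (hstoch : ∀ ε : ℝ, 0 < ε → (∀ u v, 0 ≤ P ε u v) ∧ ∀ u, ∑ v, P ε u v = 1) {u v : Ω} {k : ℤ}
    (h : IsTheta (fun ε => P ε u v) k) : 0 ≤ k := by
  refine h.nonneg_of_eventually_le_one ?_
  filter_upwards [self_mem_nhdsWithin] with ε hε
  obtain ⟨hnonneg, hrow⟩ := hstoch ε hε
  exact hrow u ▸ single_le_sum (fun w _ => hnonneg u w) (mem_univ v)

lemma eventually_netFlow_eq_zero
    (hzero : ∀ u v, ¬ EPos P u v → ∃ εbar > (0 : ℝ), ∀ ε, 0 < ε → ε < εbar → P ε u v = 0)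
    (hsym : ∀ u v, EPos P u v ↔ EPos P v u) {p q : Ω} (hpq : ¬ EPos P p q) :
    ∀ᶠ ε in 𝓝[>] (0 : ℝ), netFlow (π ε) (P ε) p q = 0 := by
  obtain ⟨s, hs, hPpq⟩ := hzero p q hpq
  obtain ⟨t, ht, hPqp⟩ := hzero q p (mt (hsym q p).1 hpq)
  filter_upwards [Ioo_mem_nhdsGT (lt_min hs ht)] with ε ⟨hε, hεst⟩
  rw [netFlow, hPpq ε hε (hεst.trans_le (min_le_left _ _)),
    hPqp ε hε (hεst.trans_le (min_le_right _ _)), mul_zero, mul_zero, sub_zero]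

lemma eventually_netFlow_neg (hsym : ∀ u v, EPos P u v ↔ EPos P v u)
    (hφP : ∀ u v, EPos P u v → IsTheta (fun ε => P ε u v) (φP u v))
    (hν : ∀ u v, EPos P u v → ν u + φP u v = ν v + φP v u)
    (hφπ : ∀ x, IsTheta (fun ε => π ε x) (φπ x)) {p q : Ω} (hpq : EPos P p q)
    (hd : φπ q - ν q < φπ p - ν p) :
    ∀ᶠ ε in 𝓝[>] (0 : ℝ), netFlow (π ε) (P ε) p q < 0 := by
  have hord : φπ q + φP q p < φπ p + φP p q := by linarith [hν p q hpq]
  filter_upwards [((hφπ p).mul (hφP p q hpq)).eventually_lt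
    ((hφπ q).mul (hφP q p ((hsym p q).1 hpq))) hord] with ε h
  exact sub_neg.2 h

lemma stationary_order_sub_potential_eq [Fintype Ω]
    (hrow : ∀ ε : ℝ, 0 < ε → ∀ u, ∑ v, P ε u v = 1)
    (hzero : ∀ u v, ¬ EPos P u v → ∃ εbar > (0 : ℝ), ∀ ε, 0 < ε → ε < εbar → P ε u v = 0)
    (hsym : ∀ u v, EPos P u v ↔ EPos P v u)
    (hφP : ∀ u v, EPos P u v → IsTheta (fun ε => P ε u v) (φP u v))
    (hirr : ∀ u v, ∃ (r : ℕ) (c : ℕ → Ω), c 0 = u ∧ c r = v ∧ ∀ i < r, EPos P (c i) (c (i + 1)))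
    (hν : ∀ u v, EPos P u v → ν u + φP u v = ν v + φP v u)
    (hstat : ∀ ε : ℝ, 0 < ε → ∀ y, ∑ x, π ε x * P ε x y = π ε y)
    (hφπ : ∀ x, IsTheta (fun ε => π ε x) (φπ x)) (u v : Ω) :
    φπ u - ν u = φπ v - ν v := by
  classical
  have hev : ∀ᶠ ε in 𝓝[>] (0 : ℝ), 0 < ε ∧ ∀ p q, φπ q - ν q < φπ p - ν p →
      netFlow (π ε) (P ε) p q ≤ 0 ∧ (EPos P p q → netFlow (π ε) (P ε) p q < 0) := by
    refine Eventually.and self_mem_nhdsWithin (eventually_all.2 fun p => eventually_all.2 fun q => ?_)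
    by_cases hd : φπ q - ν q < φπ p - ν p
    · by_cases hpq : EPos P p q
      · filter_upwards [eventually_netFlow_neg hsym hφP hν hφπ hpq hd] with ε h _
        exact ⟨h.le, fun _ => h⟩
      · filter_upwards [eventually_netFlow_eq_zero hzero hsym hpq] with ε h _
        exact ⟨h.le, fun h' => absurd h' hpq⟩
    · exact .of_forall fun _ h => absurd h hd
  obtain ⟨ε, hε, hflow⟩ := hev.exists
  exact eq_of_netFlow_downhill hirr (sum_netFlow_compl_eq_zero (hrow ε hε) (hstat ε hε))
    (fun p q hd => (hflow p q hd).1) (fun p q hpq hd => (hflow p q hd).2 hpq) u v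

end OMReversible

/-- Geometric characterization: for an irreducible, OM-reversible family with stationary
distributions of integer orders of magnitude, `φ(P(x,y)) − φ(P(y,x)) = φ(π(y)) − φ(π(x))`
whenever `P(x,y) > 0`; in particular, if `φ(π(y)) > φ(π(x))` then `φ(P(x,y)) ≥ 1`, i.e. the
transition `x → y` is at least one order of magnitude less likely than `y → x`. -/
theorem OM_reversible_upward_transitions_are_less_likely
    {Ω : Type*} [Fintype Ω] (P : ℝ → Ω → Ω → ℝ)
    (hstoch : ∀ ε : ℝ, 0 < ε → (∀ u v : Ω, 0 ≤ P ε u v) ∧ ∀ u : Ω, ∑ v, P ε u v = 1)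
    (hzero : ∀ u v : Ω, ¬ EPos P u v →
      ∃ εbar > (0 : ℝ), ∀ ε : ℝ, 0 < ε → ε < εbar → P ε u v = 0)
    (hsym : ∀ u v : Ω, EPos P u v ↔ EPos P v u)
    (φP : Ω → Ω → ℤ)
    (hφP : ∀ u v : Ω, EPos P u v → IsTheta (fun ε => P ε u v) (φP u v))
    (hirr : ∀ u v : Ω, ∃ (r : ℕ) (c : ℕ → Ω),
      c 0 = u ∧ c r = v ∧ ∀ i < r, EPos P (c i) (c (i + 1)))
    (homrev : ∃ ν : Ω → ℤ, ∀ u v : Ω, EPos P u v → ν u + φP u v = ν v + φP v u)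
    (π : ℝ → Ω → ℝ)
    (hstat : ∀ ε : ℝ, 0 < ε → (∀ x : Ω, 0 ≤ π ε x) ∧ (∑ x, π ε x) = 1 ∧
      ∀ y : Ω, (∑ x, π ε x * P ε x y) = π ε y)
    (φπ : Ω → ℤ)
    (hφπ : ∀ x : Ω, IsTheta (fun ε => π ε x) (φπ x)) :
    ∀ x y : Ω, EPos P x y →
      φP x y - φP y x = φπ y - φπ x ∧ (φπ x < φπ y → 1 ≤ φP x y) := by
  obtain ⟨ν, hν⟩ := homrev
  intro x y hxy
  have hpot := stationary_order_sub_potential_eq (fun ε hε => (hstoch ε hε).2) hzero hsym hφP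
    hirr hν (fun ε hε => (hstat ε hε).2.2) hφπ x y
  have hrev := hν x y hxy
  have hφPyx := (hφP y x ((hsym x y).1 hxy)).nonneg_of_stochastic hstoch
  exact ⟨by omega, fun _ => by omega⟩
end

section
/- Let (X^ε, Ω, P^ε) be a clustering process on a finite connected graph with n ≥ 1 particles, and let π^ε be stationary distributions for P^ε whose entries have integer orders of magnitude φ(π(x)). Then the set Ω₀ = {z ∈ Ω : φ(π(z)) = 0} of states with positive probability in the limit ε → 0 is exactly the set of single pole states: Ω₀ = {z ∈ Ω : |s(z)| = 1}. -/
open Finset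

/-- Configurations of `n` particles on the vertex set `V`. -/
abbrev Config (V : Type) [Fintype V] (n : ℕ) := {x : V → ℕ // ∑ v, x v = n}

noncomputable instance Config.fintype {V : Type} [Fintype V] [DecidableEq V] {n : ℕ} :
    Fintype (Config V n) :=
  Fintype.ofInjective
    (fun x : Config V n => fun v : V =>
      (⟨x.val v, Nat.lt_succ_of_le ((Finset.single_le_sum
        (f := x.val) (fun i _ => Nat.zero_le _) (Finset.mem_univ v)).trans
        (le_of_eq x.2))⟩ : Fin (n + 1)))
    (fun a b h => Subtype.ext (funext fun v => congrArg Fin.val (congrFun h v)))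

/-- The configuration `x^{i,j}` obtained from `x` by moving one particle from vertex `i`
to vertex `j` (with `x^{i,i} = x`). -/
def move {V : Type} [DecidableEq V] (x : V → ℕ) (i j : V) : V → ℕ :=
  if i = j then x else Function.update (Function.update x i (x i - 1)) j (x j + 1)

/-- The support of a configuration: the set of occupied vertices. -/
def supp {V : Type} [Fintype V] [DecidableEq V] (x : V → ℕ) : Finset V :=
  Finset.univ.filter fun v => x v ≠ 0


/-!
Write `cost x j = φ x + [x_j = 0]`; it is the order of the stationary flow `π(x) P(x, x^{i,j})`.
Stationarity balances the flow out of any set of states against the flow into it, so if every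
move entering a set costs more than `t`, so does every move leaving it. Applied to the sets
`{z : |s(z)| ≥ k}` this gives `φ > 0` whenever two adjacent vertices are occupied; applied to the
complement of a pole, it shows that a pole is strictly cheaper than every move into it, which
propagates `φ = 0` from a pole to the poles at its neighbours.

If `φ y = 0`, then `s(y)` is independent. The set of states from which `y` is reached by moves
of cost `≤ 1` can only be entered at cost `≥ 2`, so it is closed under such moves. These include
merging into an occupied neighbour and sliding a cluster of a state with independent support,
which by connectivity gather all particles on one vertex. Moves of cost `≤ 1` keep the support
a clique, so `s(y)`, reached from that state, is a clique as well, i.e. `|s(y)| = 1`. Finally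
`∑ π = 1` forces `φ = 0` somewhere.
-/

open Filter Topology Asymptotics Relation

section Asymptotics

theorem IsTheta.isTheta_zpow {f : ℝ → ℝ} {k : ℤ} (h : IsTheta f k) :
    f =Θ[𝓝[>] 0] fun ε => ε ^ k := by
  obtain ⟨M₁, M₂, εbar, hM₁, hM₂, hεbar, hf⟩ := h
  have hev : ∀ᶠ ε in 𝓝[>] (0 : ℝ), M₁ * ε ^ k ≤ f ε ∧ f ε ≤ M₂ * ε ^ k ∧ 0 < ε ^ k :=
    Filter.mem_of_superset (Ioo_mem_nhdsGT hεbar) fun ε hε =>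
      ⟨(hf ε hε.1 hε.2).1, (hf ε hε.1 hε.2).2, zpow_pos hε.1 k⟩
  refine ⟨IsBigO.of_bound M₂ ?_, IsBigO.of_bound M₁⁻¹ ?_⟩ <;>
    filter_upwards [hev] with ε ⟨h₁, h₂, hpos⟩ <;>
    rw [Real.norm_of_nonneg hpos.le, Real.norm_of_nonneg (by nlinarith)]
  · exact h₂
  · rwa [le_inv_mul_iff₀ hM₁]

theorem zpow_isBigO_zpow_iff {a b : ℤ} :
    ((fun ε : ℝ => ε ^ a) =O[𝓝[>] 0] fun ε => ε ^ b) ↔ b ≤ a := by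
  constructor
  · intro h
    by_contra! hab
    obtain ⟨c, hc⟩ := h.bound
    obtain ⟨ε, hεc, hε0, hε⟩ :=
      (hc.and (Ioo_mem_nhdsGT (show (0 : ℝ) < 1 / (|c| + 1) by positivity))).exists
    have hε1 : ε < 1 := hε.trans_le (div_le_one_of_le₀ (by linarith [abs_nonneg c]) (by positivity))
    have hεc' : |c| * ε < 1 := by
      rw [lt_div_iff₀ (by positivity)] at hε; nlinarith [abs_nonneg c]
    have hpow : ε ^ b ≤ ε ^ a * ε := by
      rw [← zpow_add_one₀ hε0.ne']; exact zpow_le_zpow_right_of_le_one₀ hε0 hε1.le hab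
    have hpos : 0 < ε ^ a := zpow_pos hε0 a
    rw [Real.norm_of_nonneg hpos.le, Real.norm_of_nonneg (zpow_pos hε0 b).le] at hεc
    nlinarith [le_abs_self c, abs_nonneg c, zpow_pos hε0 b]
  · intro hba
    refine IsBigO.of_bound 1 ?_
    filter_upwards [Ioo_mem_nhdsGT one_pos] with ε ⟨hε0, hε1⟩
    rw [Real.norm_of_nonneg (zpow_pos hε0 a).le, Real.norm_of_nonneg (zpow_pos hε0 b).le, one_mul]
    exact zpow_le_zpow_right_of_le_one₀ hε0 hε1.le hba

theorem isBigO_of_nonneg_of_le {f g : ℝ → ℝ} (h : ∀ ε, 0 < ε → 0 ≤ f ε ∧ f ε ≤ g ε) :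
    f =O[𝓝[>] 0] g :=
  IsBigO.of_norm_eventuallyLE <| eventually_nhdsWithin_of_forall fun ε hε => by
    simpa only [Real.norm_of_nonneg (h ε hε).1] using (h ε hε).2

end Asymptotics

section MarkovChain

variable {Ω : Type*} [Fintype Ω] [DecidableEq Ω]

theorem sum_flow_out_eq_sum_flow_in {R : Type*} [Ring R] {P : Ω → Ω → R} {π : Ω → R}
    (hP : ∀ x, ∑ y, P x y = 1) (hπ : ∀ y, ∑ x, π x * P x y = π y) (B : Finset Ω) :
    ∑ x ∈ B, ∑ y ∈ Bᶜ, π x * P x y = ∑ x ∈ Bᶜ, ∑ y ∈ B, π x * P x y := by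
  have hout : ∑ x ∈ B, π x =
      ∑ x ∈ B, ∑ y ∈ B, π x * P x y + ∑ x ∈ B, ∑ y ∈ Bᶜ, π x * P x y := by
    rw [← sum_add_distrib]
    refine sum_congr rfl fun x _ => ?_
    rw [sum_add_sum_compl, ← mul_sum, hP, mul_one]
  have hin : ∑ y ∈ B, π y =
      ∑ x ∈ B, ∑ y ∈ B, π x * P x y + ∑ x ∈ Bᶜ, ∑ y ∈ B, π x * P x y := by
    rw [sum_comm (s := B), sum_comm (s := Bᶜ), ← sum_add_distrib]
    refine sum_congr rfl fun y _ => ?_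
    rw [sum_add_sum_compl, hπ]
  exact add_left_cancel (hout.symm.trans hin)

theorem exit_flow_isBigO {P : ℝ → Ω → Ω → ℝ} {π : ℝ → Ω → ℝ} {g : ℝ → ℝ}
    (hP : ∀ ε, 0 < ε → ∀ x y, 0 ≤ P ε x y) (hrow : ∀ ε, 0 < ε → ∀ x, ∑ y, P ε x y = 1)
    (hπ : ∀ ε, 0 < ε → ∀ x, 0 ≤ π ε x) (hstat : ∀ ε, 0 < ε → ∀ y, ∑ x, π ε x * P ε x y = π ε y)
    {B : Finset Ω} (hentry : ∀ u ∉ B, ∀ v ∈ B, (fun ε => π ε u * P ε u v) =O[𝓝[>] 0] g)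
    {x y : Ω} (hx : x ∈ B) (hy : y ∉ B) : (fun ε => π ε x * P ε x y) =O[𝓝[>] 0] g := by
  have hflow : ∀ ε, 0 < ε → ∀ u v, 0 ≤ π ε u * P ε u v := fun ε hε u v =>
    mul_nonneg (hπ ε hε u) (hP ε hε u v)
  refine IsBigO.trans (isBigO_of_nonneg_of_le fun ε hε => ⟨hflow ε hε x y, ?_⟩)
    (IsBigO.fun_sum fun u hu => IsBigO.fun_sum fun v hv => hentry u (mem_compl.1 hu) v hv)
  rw [← sum_flow_out_eq_sum_flow_in (hrow ε hε) (hstat ε hε)]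
  calc π ε x * P ε x y ≤ ∑ y ∈ Bᶜ, π ε x * P ε x y :=
        single_le_sum (fun y _ => hflow ε hε x y) (mem_compl.2 hy)
    _ ≤ ∑ x ∈ B, ∑ y ∈ Bᶜ, π ε x * P ε x y :=
        single_le_sum (f := fun x => ∑ y ∈ Bᶜ, π ε x * P ε x y)
          (fun x _ => sum_nonneg fun y _ => hflow ε hε x y) hx

end MarkovChain

section Configurations

variable {V : Type} [DecidableEq V]

def transfer (x : V → ℕ) (p q : V) (k : ℕ) : V → ℕ :=
  Function.update (Function.update x p (x p - k)) q (x q + k)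

theorem move_eq_transfer_one {x : V → ℕ} {i j : V} (hij : i ≠ j) :
    move x i j = transfer x i j 1 := by
  simp [move, transfer, hij]

theorem transfer_apply_left {x : V → ℕ} {p q : V} (hpq : p ≠ q) (k : ℕ) :
    transfer x p q k p = x p - k := by
  simp [transfer, hpq]

theorem transfer_apply_right (x : V → ℕ) (p q : V) (k : ℕ) : transfer x p q k q = x q + k := by
  simp [transfer]

theorem transfer_apply_of_ne {x : V → ℕ} {p q v : V} (hvp : v ≠ p) (hvq : v ≠ q) (k : ℕ) :
    transfer x p q k v = x v := by
  simp [transfer, hvp, hvq]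

theorem transfer_zero (x : V → ℕ) (p q : V) : transfer x p q 0 = x := by
  simp [transfer]

theorem move_transfer {x : V → ℕ} {p q : V} (hpq : p ≠ q) (k : ℕ) :
    move (transfer x p q k) p q = transfer x p q (k + 1) := by
  ext v
  rw [move_eq_transfer_one hpq]
  by_cases hvp : v = p
  · subst hvp; simp only [transfer_apply_left hpq]; omega
  by_cases hvq : v = q
  · subst hvq; simp only [transfer_apply_right]; omega
  · simp only [transfer_apply_of_ne hvp hvq]

theorem move_apply_left {x : V → ℕ} {i j : V} (hij : i ≠ j) : move x i j i = x i - 1 := by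
  rw [move_eq_transfer_one hij, transfer_apply_left hij]

theorem move_apply_right {x : V → ℕ} {i j : V} (hij : i ≠ j) : move x i j j = x j + 1 := by
  rw [move_eq_transfer_one hij, transfer_apply_right]

variable [Fintype V] {n : ℕ}

theorem sum_move {x : V → ℕ} {i : V} (hi : x i ≠ 0) (j : V) :
    ∑ v, move x i j v = ∑ v, x v := by
  rcases eq_or_ne i j with rfl | hij
  · simp [move]
  have key : ∀ (f : V → ℕ) (a : V) (b : ℕ), ∑ v, Function.update f a b v + f a = ∑ v, f v + b := by
    intro f a b
    rw [sum_update_of_mem (mem_univ a), sum_eq_add_sum_sdiff_singleton_of_mem (mem_univ a) f]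
    ring
  have h₁ := key (Function.update x i (x i - 1)) j (x j + 1)
  have h₂ := key x i (x i - 1)
  rw [Function.update_of_ne hij.symm] at h₁
  rw [move_eq_transfer_one hij, transfer]
  omega

theorem exists_val_eq_move (x : Config V n) {i : V} (hi : x.val i ≠ 0) (j : V) :
    ∃ y : Config V n, y.val = move x.val i j :=
  ⟨⟨move x.val i j, (sum_move hi j).trans x.2⟩, rfl⟩

theorem exists_val_eq_transfer {D : Set (Config V n)} {p q : V} (hpq : p ≠ q)
    (hD : ∀ y ∈ D, ∀ y' : Config V n, y.val p ≠ 0 → y'.val = move y.val p q → y' ∈ D)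
    {z : Config V n} (hz : z ∈ D) {k : ℕ} (hk : k ≤ z.val p) :
    ∃ z' ∈ D, z'.val = transfer z.val p q k := by
  induction k with
  | zero => exact ⟨z, hz, (transfer_zero _ p q).symm⟩
  | succ k ih =>
    obtain ⟨z', hz', hval⟩ := ih (by omega)
    have hp : z'.val p ≠ 0 := by rw [hval, transfer_apply_left hpq]; omega
    obtain ⟨y, hy⟩ := exists_val_eq_move z' hp q
    exact ⟨y, hD z' hz' y hp hy, by rw [hy, hval, move_transfer hpq]⟩

theorem mem_supp {x : V → ℕ} {v : V} : v ∈ supp x ↔ x v ≠ 0 := by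
  simp [supp]

theorem supp_nonempty (hn : n ≠ 0) (x : Config V n) : (supp x.val).Nonempty := by
  by_contra h
  rw [not_nonempty_iff_eq_empty, eq_empty_iff_forall_notMem] at h
  exact hn (x.2 ▸ sum_eq_zero fun v _ => by simpa [mem_supp] using h v)

theorem supp_move_subset_insert (x : V → ℕ) (i j : V) :
    supp (move x i j) ⊆ insert j (supp x) := by
  intro v hv
  rw [mem_insert, mem_supp]
  by_contra! h
  rw [mem_supp] at hv
  rcases eq_or_ne i j with rfl | hij
  · exact hv (by simpa [move] using h.2)
  rw [move_eq_transfer_one hij] at hv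
  by_cases hvi : v = i
  · subst hvi; rw [transfer_apply_left hij] at hv; omega
  · rw [transfer_apply_of_ne hvi h.1] at hv; exact hv h.2

theorem supp_move_subset {x : V → ℕ} (i : V) {j : V} (hj : x j ≠ 0) :
    supp (move x i j) ⊆ supp x :=
  insert_eq_of_mem (mem_supp.2 hj) ▸ supp_move_subset_insert x i j

theorem supp_move_ssubset {x : V → ℕ} {i j : V} (hij : i ≠ j) (hi : x i = 1) (hj : x j ≠ 0) :
    supp (move x i j) ⊂ supp x :=
  (ssubset_iff_of_subset (supp_move_subset i hj)).2
    ⟨i, mem_supp.2 (by omega), by rw [mem_supp, move_apply_left hij]; omega⟩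

theorem supp_transfer_self {x : V → ℕ} {p q : V} (hpq : p ≠ q) (hp : x p ≠ 0) :
    supp (transfer x p q (x p)) = insert q ((supp x).erase p) := by
  ext v
  rw [mem_insert, mem_erase, mem_supp, mem_supp]
  by_cases hvq : v = q
  · subst hvq; simp [transfer_apply_right, hpq.symm]; omega
  by_cases hvp : v = p
  · subst hvp; simp [transfer_apply_left hpq, hvq]
  · simp [transfer_apply_of_ne hvp hvq, hvp, hvq]

theorem val_eq_zero_of_isIndepSet {G : SimpleGraph V} {x : V → ℕ} (h : G.IsIndepSet (supp x))
    {i j : V} (hij : G.Adj i j) (hi : x i ≠ 0) : x j = 0 := by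
  by_contra hj
  exact h (mem_supp.2 hi) (mem_supp.2 hj) hij.ne hij

namespace Config

def pole (n : ℕ) (v : V) : Config V n := ⟨Pi.single v n, by simp⟩

theorem supp_pole (hn : n ≠ 0) (v : V) : supp (pole n v).val = {v} := by
  ext w
  by_cases hw : w = v <;> simp [mem_supp, pole, hw, hn]

theorem eq_pole_of_supp_eq_singleton {x : Config V n} {v : V} (h : supp x.val = {v}) :
    x = pole n v := by
  have hzero : ∀ w, w ≠ v → x.val w = 0 := fun w hw => by
    by_contra hx
    exact hw (mem_singleton.1 (h ▸ mem_supp.2 hx))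
  have hv : x.val v = n := by
    simpa [sum_eq_single v (fun w _ hw => hzero w hw)] using x.2
  ext w
  by_cases hw : w = v
  · subst hw; simp [pole, hv]
  · simp [pole, hw, hzero w hw]

theorem transfer_pole {p q : V} (hpq : p ≠ q) :
    transfer (pole n p).val p q n = (pole n q).val := by
  ext v
  by_cases hvq : v = q
  · subst hvq; simp [transfer_apply_right, pole, hpq]
  by_cases hvp : v = p
  · subst hvp; simp [transfer_apply_left hpq, pole, hvq]
  · simp [transfer_apply_of_ne hvp hvq, pole, hvp, hvq]

end Config

end Configurations

section Gathering

variable {V : Type} [Fintype V] [DecidableEq V] {n : ℕ}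

def GatheringMove (G : SimpleGraph V) (x y : Config V n) : Prop :=
  ∃ i j, G.Adj i j ∧ x.val i ≠ 0 ∧ y.val = move x.val i j ∧
    (x.val j ≠ 0 ∨ G.IsIndepSet (supp x.val))

variable {G : SimpleGraph V}

theorem exists_gatheringMove_supp_eq {z : Config V n} {p q : V} (hpq : G.Adj p q) (hp : z.val p ≠ 0)
    (hq : z.val q ≠ 0 ∨ G.IsIndepSet (supp z.val)) :
    ∃ z', ReflTransGen (GatheringMove G) z z' ∧ supp z'.val = insert q ((supp z.val).erase p) := by
  let D := {y | ReflTransGen (GatheringMove G) z y ∧ (y.val q ≠ 0 ∨ G.IsIndepSet (supp y.val))}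
  have hD : ∀ y ∈ D, ∀ y' : Config V n, y.val p ≠ 0 → y'.val = move y.val p q → y' ∈ D := by
    rintro y ⟨hzy, hyq⟩ y' hyp hy'
    refine ⟨hzy.tail ⟨p, q, hpq, hyp, hy', hyq⟩, Or.inl ?_⟩
    rw [hy', move_apply_right hpq.ne]
    omega
  obtain ⟨z', ⟨hzz', -⟩, hval⟩ := exists_val_eq_transfer hpq.ne hD ⟨.refl, hq⟩ le_rfl
  exact ⟨z', hzz', by rw [hval, supp_transfer_self hpq.ne hp]⟩

theorem exists_gatheringMove_card_supp_lt_of_not_isIndepSet {z : Config V n}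
    (hz : ¬ G.IsIndepSet (supp z.val)) :
    ∃ z', ReflTransGen (GatheringMove G) z z' ∧ (supp z'.val).card < (supp z.val).card := by
  obtain ⟨p, hp, q, hq, -, hpq⟩ : ∃ p ∈ supp z.val, ∃ q ∈ supp z.val, p ≠ q ∧ G.Adj p q := by
    simpa [SimpleGraph.IsIndepSet, Set.Pairwise] using hz
  obtain ⟨z', hzz', hsupp⟩ :=
    exists_gatheringMove_supp_eq hpq (mem_supp.1 hp) (Or.inl (mem_supp.1 hq))
  refine ⟨z', hzz', ?_⟩
  rw [hsupp, insert_eq_of_mem (mem_erase.2 ⟨hpq.ne.symm, hq⟩)]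
  exact card_erase_lt_of_mem hp

theorem exists_gatheringMove_card_supp_lt_of_walk {p q : V} (w : G.Walk p q) {z : Config V n}
    (hp : z.val p ≠ 0) (hq : z.val q ≠ 0) (hpq : p ≠ q) :
    ∃ z', ReflTransGen (GatheringMove G) z z' ∧ (supp z'.val).card < (supp z.val).card := by
  induction w generalizing z with
  | nil => exact absurd rfl hpq
  | @cons p r q hpr w ih =>
    by_cases hind : G.IsIndepSet (supp z.val)
    swap
    · exact exists_gatheringMove_card_supp_lt_of_not_isIndepSet hind
    have hr : z.val r = 0 := val_eq_zero_of_isIndepSet hind hpr hp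
    obtain ⟨z', hzz', hsupp⟩ := exists_gatheringMove_supp_eq hpr hp (Or.inr hind)
    have hcard : (supp z'.val).card = (supp z.val).card := by
      rw [hsupp, card_insert_of_notMem (fun h => (mem_supp.1 (mem_of_mem_erase h)) hr),
        card_erase_add_one (mem_supp.2 hp)]
    have hmem : ∀ v, v = r ∨ (v ≠ p ∧ z.val v ≠ 0) → z'.val v ≠ 0 := fun v hv => by
      rw [← mem_supp, hsupp, mem_insert, mem_erase, mem_supp]; exact hv
    obtain ⟨z'', hz'z'', hlt⟩ := ih (hmem r (Or.inl rfl))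
      (hmem q (Or.inr ⟨fun h => hpq h.symm, hq⟩)) (fun h => hq (h ▸ hr))
    exact ⟨z'', hzz'.trans hz'z'', hcard ▸ hlt⟩

theorem exists_gatheringMove_card_supp_le_one (hG : G.Preconnected) (z : Config V n) :
    ∃ z', ReflTransGen (GatheringMove G) z z' ∧ (supp z'.val).card ≤ 1 := by
  induction hk : (supp z.val).card using Nat.strong_induction_on generalizing z with
  | _ k ih =>
    by_cases hk1 : k ≤ 1
    · exact ⟨z, .refl, hk ▸ hk1⟩
    obtain ⟨p, hp, q, hq, hpq⟩ := one_lt_card.1 (show 1 < (supp z.val).card by omega)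
    obtain ⟨z', hzz', hlt⟩ :=
      exists_gatheringMove_card_supp_lt_of_walk (hG p q).some (mem_supp.1 hp) (mem_supp.1 hq) hpq
    obtain ⟨z'', hz'z'', hle⟩ := ih _ (hk ▸ hlt) z' rfl
    exact ⟨z'', hzz'.trans hz'z'', hle⟩

end Gathering

/-- A clustering process together with stationary distributions `π^ε` and the orders `φ` of
their entries. -/
structure ClusteringProcess (V : Type) [Fintype V] [DecidableEq V] (n : ℕ) where
  G : SimpleGraph V
  P : ℝ → Config V n → Config V n → ℝ
  P_nonneg : ∀ ε : ℝ, 0 < ε → ∀ x y, 0 ≤ P ε x y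
  sum_P : ∀ ε : ℝ, 0 < ε → ∀ x, ∑ y, P ε x y = 1
  eq_or_move_of_ePos : ∀ x y, EPos P x y →
    y = x ∨ ∃ i j : V, G.Adj i j ∧ 1 ≤ x.val i ∧ y.val = move x.val i j
  eventually_zero : ∀ x y, ¬ EPos P x y →
    ∃ εbar > (0 : ℝ), ∀ ε : ℝ, 0 < ε → ε < εbar → P ε x y = 0
  isTheta_move : ∀ (x y) (i j : V), G.Adj i j → 1 ≤ x.val i → y.val = move x.val i j →
    IsTheta (fun ε => P ε x y) (if x.val j = 0 then 1 else 0)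
  π : ℝ → Config V n → ℝ
  π_nonneg : ∀ ε : ℝ, 0 < ε → ∀ z, 0 ≤ π ε z
  sum_π : ∀ ε : ℝ, 0 < ε → ∑ z, π ε z = 1
  π_stationary : ∀ ε : ℝ, 0 < ε → ∀ y, ∑ x, π ε x * P ε x y = π ε y
  φ : Config V n → ℤ
  isTheta_π : ∀ z, IsTheta (fun ε => π ε z) (φ z)

namespace ClusteringProcess

variable {V : Type} [Fintype V] [DecidableEq V] {n : ℕ} (C : ClusteringProcess V n)

def cost (x : Config V n) (j : V) : ℤ := C.φ x + if x.val j = 0 then 1 else 0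

theorem isTheta_flow_move {x y : Config V n} {i j : V} (hij : C.G.Adj i j) (hi : x.val i ≠ 0)
    (hxy : y.val = move x.val i j) :
    (fun ε => C.π ε x * C.P ε x y) =Θ[𝓝[>] 0] fun ε => ε ^ C.cost x j := by
  have hP := (C.isTheta_move x y i j hij (Nat.one_le_iff_ne_zero.2 hi) hxy).isTheta_zpow
  refine ((C.isTheta_π x).isTheta_zpow.mul hP).trans_eventuallyEq ?_
  filter_upwards [self_mem_nhdsWithin] with ε hε
  rw [cost, zpow_add₀ (ne_of_gt hε)]

theorem flow_isBigO_of_le_cost {x y : Config V n} {t : ℤ} (hne : y ≠ x)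
    (h : ∀ i j, C.G.Adj i j → x.val i ≠ 0 → y.val = move x.val i j → t ≤ C.cost x j) :
    (fun ε => C.π ε x * C.P ε x y) =O[𝓝[>] 0] fun ε => ε ^ t := by
  by_cases hpos : EPos C.P x y
  · obtain rfl | ⟨i, j, hij, hi, hxy⟩ := C.eq_or_move_of_ePos x y hpos
    · exact absurd rfl hne
    have hi : x.val i ≠ 0 := by omega
    exact (C.isTheta_flow_move hij hi hxy).isBigO.trans
      (zpow_isBigO_zpow_iff.2 (h i j hij hi hxy))
  · obtain ⟨εbar, hεbar, hzero⟩ := C.eventually_zero x y hpos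
    refine EventuallyEq.trans_isBigO ?_ (isBigO_zero _ _)
    filter_upwards [Ioo_mem_nhdsGT hεbar] with ε hε
    simp [hzero ε hε.1 hε.2]

theorem lt_cost_of_exit (B : Set (Config V n)) (t : ℤ)
    (hentry : ∀ u v i j, u ∉ B → v ∈ B → C.G.Adj i j → u.val i ≠ 0 →
      v.val = move u.val i j → t < C.cost u j)
    {x y : Config V n} {i j : V} (hx : x ∈ B) (hy : y ∉ B) (hij : C.G.Adj i j)
    (hi : x.val i ≠ 0) (hxy : y.val = move x.val i j) : t < C.cost x j := by
  classical
  have hexit := exit_flow_isBigO C.P_nonneg C.sum_P C.π_nonneg C.π_stationary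
    (B := B.toFinset) (g := fun ε => ε ^ (t + 1)) ?_ (Set.mem_toFinset.2 hx) (by simpa using hy)
  · have := zpow_isBigO_zpow_iff.1 ((C.isTheta_flow_move hij hi hxy).symm.isBigO.trans hexit)
    omega
  · intro u hu v hv
    rw [Set.mem_toFinset] at hu hv
    exact C.flow_isBigO_of_le_cost (fun h => hu (h ▸ hv)) fun i j hij hi hv' =>
      hentry u v i j hu hv hij hi hv'

theorem φ_nonneg (z : Config V n) : 0 ≤ C.φ z := by
  have hle : (fun ε => C.π ε z) =O[𝓝[>] 0] fun ε : ℝ => ε ^ (0 : ℤ) :=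
    isBigO_of_nonneg_of_le fun ε hε => ⟨C.π_nonneg ε hε z, by
      rw [zpow_zero, ← C.sum_π ε hε]
      exact single_le_sum (fun w _ => C.π_nonneg ε hε w) (mem_univ z)⟩
  exact zpow_isBigO_zpow_iff.1 ((C.isTheta_π z).isTheta_zpow.symm.isBigO.trans hle)

theorem exists_φ_eq_zero : ∃ z, C.φ z = 0 := by
  by_contra! h
  have hsum : (fun ε => ∑ z, C.π ε z) =O[𝓝[>] 0] fun ε : ℝ => ε ^ (1 : ℤ) :=
    IsBigO.fun_sum fun z _ => (C.isTheta_π z).isTheta_zpow.isBigO.trans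
      (zpow_isBigO_zpow_iff.2 (by have := C.φ_nonneg z; have := h z; omega))
  have hone : (fun ε : ℝ => ε ^ (0 : ℤ)) =ᶠ[𝓝[>] 0] fun ε => ∑ z, C.π ε z :=
    eventually_nhdsWithin_of_forall fun ε hε => by simp [C.sum_π ε hε]
  have := zpow_isBigO_zpow_iff.1 (hone.trans_isBigO hsum)
  omega

theorem φ_le_cost {x y : Config V n} {i j : V} (hij : C.G.Adj i j) (hi : x.val i ≠ 0)
    (hxy : y.val = move x.val i j) : C.φ y ≤ C.cost x j := by
  have hflow : (fun ε => C.π ε x * C.P ε x y) =O[𝓝[>] 0] fun ε => C.π ε y :=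
    isBigO_of_nonneg_of_le fun ε hε => ⟨mul_nonneg (C.π_nonneg ε hε x) (C.P_nonneg ε hε x y), by
      rw [← C.π_stationary ε hε y]
      exact single_le_sum (f := fun w => C.π ε w * C.P ε w y)
        (fun w _ => mul_nonneg (C.π_nonneg ε hε w) (C.P_nonneg ε hε w y)) (mem_univ x)⟩
  exact zpow_isBigO_zpow_iff.1 ((C.isTheta_flow_move hij hi hxy).symm.isBigO.trans
    (hflow.trans (C.isTheta_π y).isTheta_zpow.isBigO))

theorem cost_pos_of_card_supp_lt {x y : Config V n} {i j : V} (hij : C.G.Adj i j)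
    (hi : x.val i ≠ 0) (hxy : y.val = move x.val i j)
    (hlt : (supp y.val).card < (supp x.val).card) : 0 < C.cost x j := by
  refine C.lt_cost_of_exit {z | (supp x.val).card ≤ (supp z.val).card} 0
    (fun u v i' j' hu hv _ _ hv' => ?_) (by simp) (by simpa using hlt) hij hi hxy
  replace hu : (supp u.val).card < (supp x.val).card := not_le.1 hu
  replace hv : (supp x.val).card ≤ (supp v.val).card := hv
  by_cases hj : u.val j' = 0
  · simp [cost, hj, C.φ_nonneg u]
  · have := card_le_card (hv' ▸ supp_move_subset i' hj)
    omega

theorem φ_pos_of_adj {x : Config V n} {p q : V} (hpq : C.G.Adj p q) (hp : x.val p ≠ 0)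
    (hq : x.val q ≠ 0) : 0 < C.φ x := by
  induction hm : x.val p using Nat.strong_induction_on generalizing x with
  | _ m ih =>
    obtain ⟨y, hy⟩ := exists_val_eq_move x hp q
    have hcost : C.cost x q = C.φ x := by simp [cost, hq]
    rcases eq_or_ne m 1 with rfl | hm1
    · rw [← hcost]
      exact C.cost_pos_of_card_supp_lt hpq hp hy
        (hy ▸ card_lt_card (supp_move_ssubset hpq.ne hm hq))
    · have hyp : y.val p = m - 1 := by rw [hy, move_apply_left hpq.ne, hm]
      have hyq : y.val q ≠ 0 := by rw [hy, move_apply_right hpq.ne]; omega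
      have := ih (m - 1) (by omega) (by omega) hyq hyp
      have := C.φ_le_cost hpq hp hy
      omega

theorem isIndepSet_supp_of_φ_eq_zero {x : Config V n} (hx : C.φ x = 0) :
    C.G.IsIndepSet (supp x.val) := fun p hp q hq _ hpq => by
  have := C.φ_pos_of_adj hpq (mem_supp.1 hp) (mem_supp.1 hq)
  omega

theorem φ_lt_cost_of_isIndepSet {x y : Config V n} {i j : V}
    (hy : C.G.IsIndepSet (supp y.val)) (hxy : x ≠ y) (hij : C.G.Adj i j) (hi : x.val i ≠ 0)
    (hmove : y.val = move x.val i j) : C.φ y < C.cost x j := by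
  refine C.lt_cost_of_exit {y}ᶜ (C.φ y) (fun u v i' j' hu _ hij' hu' _ => ?_)
    hxy (by simp) hij hi hmove
  rw [Set.mem_compl_singleton_iff, not_not] at hu
  subst hu
  simp [cost, val_eq_zero_of_isIndepSet hy hij' hu']

theorem φ_pole_eq_zero_of_adj (hn : n ≠ 0) {u v : V} (huv : C.G.Adj u v)
    (hv : C.φ (Config.pole n v) = 0) : C.φ (Config.pole n u) = 0 := by
  let D := {z : Config V n | C.cost z u ≤ 1}
  have hD : ∀ y ∈ D, ∀ y' : Config V n, y.val v ≠ 0 → y'.val = move y.val v u → y' ∈ D := by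
    intro y hy y' hyv hy'
    have hle := C.φ_le_cost huv.symm hyv hy'
    have hy'u : y'.val u ≠ 0 := by rw [hy', move_apply_right huv.ne.symm]; omega
    have hcost : C.cost y' u = C.φ y' := by simp [cost, hy'u]
    exact (hcost.trans_le hle).trans hy
  have hvD : Config.pole n v ∈ D := by
    have hvu : (Config.pole n v).val u = 0 := by simp [Config.pole, huv.ne]
    simp [D, cost, hv, hvu]
  -- `w` has `n - 1` particles at `u` and one at `v`: of the moves leading there from the pole
  -- at `v`, only the first lands on an empty vertex
  obtain ⟨w, hwD, hw⟩ := exists_val_eq_transfer huv.ne.symm hD hvD (k := n - 1)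
    (by simp [Config.pole])
  have hwv : w.val v = 1 := by
    rw [hw, transfer_apply_left huv.ne.symm]; simp [Config.pole]; omega
  have hmove : (Config.pole n u).val = move w.val v u := by
    rw [hw, move_transfer huv.ne.symm, Nat.sub_add_cancel (Nat.one_le_iff_ne_zero.2 hn),
      Config.transfer_pole huv.ne.symm]
  have hne : w ≠ Config.pole n u := fun h => by
    simp [h, Config.pole, huv.ne.symm] at hwv
  have hlt := C.φ_lt_cost_of_isIndepSet (by rw [Config.supp_pole hn]; simp) hne huv.symm
    (by omega) hmove
  have := C.φ_nonneg (Config.pole n u)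
  have hwD : C.cost w u ≤ 1 := hwD
  omega

theorem φ_pole_eq_zero (hG : C.G.Preconnected) (hn : n ≠ 0) {v : V}
    (hv : C.φ (Config.pole n v) = 0) (u : V) : C.φ (Config.pole n u) = 0 := by
  obtain ⟨w⟩ := hG u v
  induction w with
  | nil => exact hv
  | cons h _ ih => exact C.φ_pole_eq_zero_of_adj hn h (ih hv)

def CheapMove (x y : Config V n) : Prop :=
  ∃ i j, C.G.Adj i j ∧ x.val i ≠ 0 ∧ y.val = move x.val i j ∧ C.cost x j ≤ 1

theorem reflTransGen_cheapMove_of_cheapMove {x y z : Config V n}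
    (hxz : ReflTransGen C.CheapMove x z) (hxy : C.CheapMove x y) :
    ReflTransGen C.CheapMove y z := by
  by_contra hyz
  obtain ⟨i, j, hij, hi, hy, hcost⟩ := hxy
  have := C.lt_cost_of_exit {w | ReflTransGen C.CheapMove w z} 1
    (fun u v i' j' hu hv hij' hu' hv' =>
      not_le.1 fun h => hu (.head ⟨i', j', hij', hu', hv', h⟩ hv))
    hxz hyz hij hi hy
  omega

theorem isClique_supp_of_cheapMove {x y : Config V n} (hx : C.G.IsClique (supp x.val))
    (hxy : C.CheapMove x y) : C.G.IsClique (supp y.val) := by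
  obtain ⟨i, j, hij, hi, hy, hcost⟩ := hxy
  rw [hy]
  by_cases hj : x.val j = 0
  · have hφ : C.φ x = 0 := by
      have := C.φ_nonneg x
      simp only [cost, hj, if_true] at hcost
      omega
    have hsupp : supp x.val ⊆ {i} := fun k hk => mem_singleton.2 <| by
      by_contra hki
      exact C.isIndepSet_supp_of_φ_eq_zero hφ hk (mem_supp.2 hi) hki (hx hk (mem_supp.2 hi) hki)
    refine (SimpleGraph.isClique_pair.2 fun _ => hij.symm).subset ?_
    have := coe_subset.2 ((supp_move_subset_insert x.val i j).trans (insert_subset_insert j hsupp))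
    rwa [coe_insert, coe_singleton] at this
  · exact hx.subset (coe_subset.2 (supp_move_subset i hj))

theorem card_supp_le_one_of_φ_eq_zero (hG : C.G.Preconnected) {y : Config V n}
    (hy : C.φ y = 0) : (supp y.val).card ≤ 1 := by
  let A := {x | ReflTransGen C.CheapMove x y}
  have hφA : ∀ x ∈ A, C.φ x ≤ 1 ∧ (C.G.IsIndepSet (supp x.val) → C.φ x = 0) := by
    intro x hx
    rcases hx.cases_head with rfl | ⟨x', ⟨i, j, hij, hi, -, hcost⟩, -⟩
    · exact ⟨by omega, fun _ => hy⟩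
    have := C.φ_nonneg x
    refine ⟨by unfold cost at hcost; split_ifs at hcost <;> omega, fun hind => ?_⟩
    simp only [cost, val_eq_zero_of_isIndepSet hind hij hi, if_true] at hcost
    omega
  have hgather : ∀ x ∈ A, ∀ x', GatheringMove C.G x x' → x' ∈ A := by
    rintro x hx x' ⟨i, j, hij, hi, hx', hj⟩
    refine C.reflTransGen_cheapMove_of_cheapMove hx ⟨i, j, hij, hi, hx', ?_⟩
    rcases hj with hj | hind
    · simpa [cost, hj] using (hφA x hx).1
    · have := (hφA x hx).2 hind
      unfold cost; split_ifs <;> omega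
  obtain ⟨z, hyz, hz⟩ := exists_gatheringMove_card_supp_le_one hG y
  have hzA : z ∈ A := by
    clear hz
    induction hyz with
    | refl => exact .refl
    | tail _ h ih => exact hgather _ ih _ h
  have hclique : ∀ w, ReflTransGen C.CheapMove z w → C.G.IsClique (supp w.val) := by
    intro w hw
    induction hw with
    | refl => exact SimpleGraph.IsClique.of_subsingleton fun a ha b hb => card_le_one.1 hz a ha b hb
    | tail _ h ih => exact C.isClique_supp_of_cheapMove ih h
  have hind := C.isIndepSet_supp_of_φ_eq_zero hy
  exact card_le_one.2 fun a ha b hb =>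
    by_contra fun hab => hind ha hb hab (hclique y hzA ha hb hab)

theorem setOf_φ_eq_zero (hG : C.G.Preconnected) (hn : n ≠ 0) :
    {z | C.φ z = 0} = {z | (supp z.val).card = 1} := by
  have hcard : ∀ z, C.φ z = 0 → (supp z.val).card = 1 := fun z hz =>
    le_antisymm (C.card_supp_le_one_of_φ_eq_zero hG hz) (card_pos.2 (supp_nonempty hn z))
  ext z
  refine ⟨hcard z, fun hz => ?_⟩
  obtain ⟨u, hu⟩ := card_eq_one.1 hz
  obtain ⟨z₀, hz₀⟩ := C.exists_φ_eq_zero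
  obtain ⟨v, hv⟩ := card_eq_one.1 (hcard z₀ hz₀)
  rw [Config.eq_pole_of_supp_eq_singleton hv] at hz₀
  show C.φ z = 0
  rw [Config.eq_pole_of_supp_eq_singleton hu]
  exact C.φ_pole_eq_zero hG hn hz₀ u

end ClusteringProcess

theorem clustering_limit_support_is_single_pole_states_general
    {V : Type} [Fintype V] [DecidableEq V]
    (G : SimpleGraph V) (hconn : G.Connected)
    (n : ℕ) (hn : 1 ≤ n)
    (P : ℝ → Config V n → Config V n → ℝ)
    (hstoch : ∀ ε : ℝ, 0 < ε →
      (∀ x y : Config V n, 0 ≤ P ε x y) ∧ ∀ x : Config V n, ∑ y, P ε x y = 1)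
    (hmoves : ∀ x y : Config V n, EPos P x y →
      y = x ∨ ∃ i j : V, G.Adj i j ∧ 1 ≤ x.val i ∧ y.val = move x.val i j)
    (hzero : ∀ x y : Config V n, ¬ EPos P x y →
      ∃ εbar > (0 : ℝ), ∀ ε : ℝ, 0 < ε → ε < εbar → P ε x y = 0)
    (hrate : ∀ (x y : Config V n) (i j : V), (G.Adj i j ∨ j = i) → 1 ≤ x.val i →
      y.val = move x.val i j →
      IsTheta (fun ε => P ε x y) (if x.val j = 0 then 1 else 0))
    (π : ℝ → Config V n → ℝ)
    (hstat : ∀ ε : ℝ, 0 < ε → (∀ z : Config V n, 0 ≤ π ε z) ∧ (∑ z, π ε z) = 1 ∧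
      ∀ y : Config V n, (∑ x, π ε x * P ε x y) = π ε y)
    (φπ : Config V n → ℤ)
    (hφπ : ∀ z : Config V n, IsTheta (fun ε => π ε z) (φπ z)) :
    {z : Config V n | φπ z = 0} = {z : Config V n | (supp z.val).card = 1} :=
  ClusteringProcess.setOf_φ_eq_zero
    { G, P, π
      P_nonneg := fun ε hε => (hstoch ε hε).1
      sum_P := fun ε hε => (hstoch ε hε).2
      eq_or_move_of_ePos := hmoves
      eventually_zero := hzero
      isTheta_move := fun x y i j hij => hrate x y i j (Or.inl hij)
      π_nonneg := fun ε hε => (hstat ε hε).1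
      sum_π := fun ε hε => (hstat ε hε).2.1
      π_stationary := fun ε hε => (hstat ε hε).2.2
      φ := φπ
      isTheta_π := hφπ }
    hconn.preconnected (Nat.one_le_iff_ne_zero.1 hn)

/-- For a clustering process with stationary distributions `π^ε` of integer orders of
magnitude, the set `Ω₀ = {z : φ(π(z)) = 0}` of states with positive limiting probability
is exactly the set of single pole states `{z : |s(z)| = 1}`. -/
theorem clustering_limit_support_is_single_pole_states
    {V : Type} [Fintype V] [DecidableEq V]
    (G : SimpleGraph V) (hconn : G.Connected)
    (n : ℕ) (hn : 1 ≤ n)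
    (P : ℝ → Config V n → Config V n → ℝ)
    (hstoch : ∀ ε : ℝ, 0 < ε →
      (∀ x y : Config V n, 0 ≤ P ε x y) ∧ ∀ x : Config V n, ∑ y, P ε x y = 1)
    (hmoves : ∀ x y : Config V n, EPos P x y →
      y = x ∨ ∃ i j : V, G.Adj i j ∧ 1 ≤ x.val i ∧ y.val = move x.val i j)
    (hzero : ∀ x y : Config V n, ¬ EPos P x y →
      ∃ εbar > (0 : ℝ), ∀ ε : ℝ, 0 < ε → ε < εbar → P ε x y = 0)
    (hsym : ∀ x y : Config V n, EPos P x y ↔ EPos P y x)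
    (hrate : ∀ (x y : Config V n) (i j : V), (G.Adj i j ∨ j = i) → 1 ≤ x.val i →
      y.val = move x.val i j →
      IsTheta (fun ε => P ε x y) (if x.val j = 0 then 1 else 0))
    (π : ℝ → Config V n → ℝ)
    (hstat : ∀ ε : ℝ, 0 < ε → (∀ z : Config V n, 0 ≤ π ε z) ∧ (∑ z, π ε z) = 1 ∧
      ∀ y : Config V n, (∑ x, π ε x * P ε x y) = π ε y)
    (φπ : Config V n → ℤ)
    (hφπ : ∀ z : Config V n, IsTheta (fun ε => π ε z) (φπ z)) :
    {z : Config V n | φπ z = 0} = {z : Config V n | (supp z.val).card = 1} :=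
  clustering_limit_support_is_single_pole_states_general G hconn n hn P hstoch hmoves hzero hrate π
    hstat φπ hφπ
end
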